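/- Let V be a pointwise finite dimensional zigzag module, and assume V is interval decomposable (as holds for every p.f.d. zigzag module by the structure theorem for zigzag modules). Then E(V) is block decomposable, and there is a bijective matching between the barcode B(V) and the barcode B(E(V)) which matches each zigzag interval ⟨b,d⟩_ZZ to the block ⟨b,d⟩_BL of the same endpoint type. -/

import Mathlib

open scoped DirectSum ENNReal

namespace PersStab

/-- A persistence module indexed by a preordered set `P`, with values in
`K`-vector spaces. -/
structure PersMod (K : Type) [Field K] (P : Type) [Preorder P] where
  V : P → Type
  [acg : ∀ a, AddCommGroup (V a)]
  [mod : ∀ a, Module K (V a)]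
  map : ∀ {a b : P}, a ≤ b → (V a →ₗ[K] V b)
  map_id : ∀ a : P, map (le_refl a) = LinearMap.id
  map_comp : ∀ {a b c : P} (h₁ : a ≤ b) (h₂ : b ≤ c),
    map (h₁.trans h₂) = (map h₂).comp (map h₁)

attribute [instance] PersMod.acg PersMod.mod

variable {K : Type} [Field K] {P : Type} [Preorder P]

/-- Pointwise finite dimensional. -/
def PersMod.pfd (M : PersMod K P) : Prop := ∀ a, FiniteDimensional K (M.V a)

/-- A morphism of persistence modules (a natural transformation). -/
structure PersHom (M N : PersMod K P) where
  app : ∀ a, M.V a →ₗ[K] N.V a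
  natural : ∀ {a b : P} (h : a ≤ b), (app b).comp (M.map h) = (N.map h).comp (app a)

/-- An isomorphism of persistence modules. -/
structure PersIso (M N : PersMod K P) where
  e : ∀ a, M.V a ≃ₗ[K] N.V a
  natural : ∀ {a b : P} (h : a ≤ b) (m : M.V a), e b (M.map h m) = N.map h (e a m)

/-- Convexity: the second defining property of an interval in a poset. -/
def IsConvexIn (J : Set P) : Prop :=
  ∀ ⦃a b c : P⦄, a ∈ J → c ∈ J → a ≤ b → b ≤ c → b ∈ J

/-- Connectivity: the third defining property of an interval in a poset:
any two points are joined by a finite zigzag of comparable points inside `J`. -/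
def IsConnectedIn (J : Set P) : Prop :=
  ∀ a ∈ J, ∀ c ∈ J, ∃ (n : ℕ) (f : Fin (n + 1) → P),
    f 0 = a ∧ f (Fin.last n) = c ∧ (∀ k, f k ∈ J) ∧
    ∀ k : Fin n, f k.castSucc ≤ f k.succ ∨ f k.succ ≤ f k.castSucc

/-- An interval in a poset: nonempty, convex and connected. -/
structure IsInterval (J : Set P) : Prop where
  nonempty : J.Nonempty
  convex : IsConvexIn J
  connected : IsConnectedIn J

-- The structure map of an interval module: the identity `K → K` if the source
-- lies in the interval, and `0` otherwise.
open Classical in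
noncomputable def ivMap (K : Type) [Field K] (J : Set P) (a c : P) :
    (PLift (a ∈ J) → K) →ₗ[K] (PLift (c ∈ J) → K) where
  toFun v _ := if h : a ∈ J then v ⟨h⟩ else 0
  map_add' u v := by
    funext hc
    by_cases h : a ∈ J <;> simp [h]
  map_smul' r v := by
    funext hc
    by_cases h : a ∈ J <;> simp [h]

/-- The interval module `I^J` of a convex set `J`: one-dimensional (a copy of `K`)
at points of `J`, zero elsewhere, with identity internal maps inside `J`. -/
noncomputable def intervalModule (K : Type) [Field K] (J : Set P) (hJ : IsConvexIn J) :
    PersMod K P where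
  V a := PLift (a ∈ J) → K
  map {a c} _ := ivMap K J a c
  map_id a := by
    refine LinearMap.ext fun v => funext fun hc => ?_
    obtain ⟨hc⟩ := hc
    simp only [ivMap, LinearMap.coe_mk, AddHom.coe_mk, LinearMap.id_coe, id_eq]
    rw [dif_pos hc]
  map_comp {a b c} h₁ h₂ := by
    refine LinearMap.ext fun v => funext fun hc => ?_
    simp only [ivMap, LinearMap.coe_mk, AddHom.coe_mk, LinearMap.coe_comp,
      Function.comp_apply]
    by_cases ha : a ∈ J
    · have hb : b ∈ J := hJ ha hc.down h₁ h₂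
      simp [ha, hb]
    · simp [ha]

/-- A decomposition of the persistence module `M` as a direct sum of interval
modules `I^{B i}`, `i : ι`, where all the sets `B i` satisfy the predicate `pred`.
The multiset `{B i | i : ι}` is the barcode of `M`. -/
structure DecompOver (pred : Set P → Prop) (M : PersMod K P) where
  ι : Type
  B : ι → Set P
  mem : ∀ i, pred (B i)
  equiv : ∀ a : P, M.V a ≃ₗ[K] (Π₀ i : ι, (PLift (a ∈ B i) → K))
  natural : ∀ {a c : P} (h : a ≤ c) (m : M.V a),
    equiv c (M.map h m) =
      DFinsupp.mapRange.linearMap (fun i => ivMap K (B i) a c) (equiv a m)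

/-- A matching between two multisets, presented as indexed families: a bijection
between a subset (the coimage) of the index set `ι` and a subset (the image) of
the index set `κ`. -/
structure Matching (ι κ : Type) : Type where
  R : ι → κ → Prop
  functional : ∀ {i j j'}, R i j → R i j' → j = j'
  injective : ∀ {i i' j}, R i j → R i' j → i = i'

section Shift

variable (sh : ℝ → P → P)

/-- `M` is `δ`-trivial (with respect to the shift `sh`): all internal maps
from `p` to the `δ`-shift of `p` vanish. -/
def ETrivial (M : PersMod K P) (δ : ℝ) : Prop :=
  ∀ (p : P) (h : p ≤ sh δ p), M.map h = 0

/-- The data `(f, g)` is an `ε`-interleaving between `M` and `N`: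
`f : M → N(ε)` and `g : N → M(ε)` are natural, and the two composites agree with
the `2ε`-shift morphisms of `M` and `N`. -/
structure IsInterleaving (ε : ℝ) (M N : PersMod K P)
    (f : ∀ p, M.V p →ₗ[K] N.V (sh ε p)) (g : ∀ p, N.V p →ₗ[K] M.V (sh ε p)) : Prop where
  nat_f : ∀ {p q : P} (h : p ≤ q) (h' : sh ε p ≤ sh ε q),
    (f q).comp (M.map h) = (N.map h').comp (f p)
  nat_g : ∀ {p q : P} (h : p ≤ q) (h' : sh ε p ≤ sh ε q),
    (g q).comp (N.map h) = (M.map h').comp (g p)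
  gf : ∀ (p : P) (h : p ≤ sh ε (sh ε p)), (g (sh ε p)).comp (f p) = M.map h
  fg : ∀ (p : P) (h : p ≤ sh ε (sh ε p)), (f (sh ε p)).comp (g p) = N.map h

/-- `M` and `N` are `ε`-interleaved. -/
def Interleaved (ε : ℝ) (M N : PersMod K P) : Prop :=
  0 ≤ ε ∧ ∃ f g, IsInterleaving sh ε M N f g

/-- The interleaving distance, valued in `ℝ≥0∞`. -/
noncomputable def dI (M N : PersMod K P) : ℝ≥0∞ :=
  ⨅ ε : {e : ℝ // Interleaved sh e M N}, ENNReal.ofReal ε.1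

/-- `σ` is an `ε`-matching between the barcodes `{A i}` and `{C j}`:
every interval of either barcode which is not `2ε`-trivial is matched, and
matched intervals have `ε`-interleaved interval modules. -/
def IsEpsMatching (K : Type) [Field K] (ε : ℝ) {ι κ : Type}
    (A : ι → Set P) (hA : ∀ i, IsConvexIn (A i))
    (C : κ → Set P) (hC : ∀ j, IsConvexIn (C j)) (σ : Matching ι κ) : Prop :=
  (∀ i, ¬ ETrivial sh (intervalModule K (A i) (hA i)) (2 * ε) → ∃ j, σ.R i j) ∧
  (∀ j, ¬ ETrivial sh (intervalModule K (C j) (hC j)) (2 * ε) → ∃ i, σ.R i j) ∧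
  (∀ i j, σ.R i j →
    Interleaved sh ε (intervalModule K (A i) (hA i)) (intervalModule K (C j) (hC j)))

/-- The bottleneck distance between two barcodes, valued in `ℝ≥0∞`. -/
noncomputable def dB (K : Type) [Field K] {ι κ : Type}
    (A : ι → Set P) (hA : ∀ i, IsConvexIn (A i))
    (C : κ → Set P) (hC : ∀ j, IsConvexIn (C j)) : ℝ≥0∞ :=
  ⨅ e : {e : ℝ // 0 ≤ e ∧ ∃ σ : Matching ι κ, IsEpsMatching sh K e A hA C hC σ},
    ENNReal.ofReal e.1

end Shift

end PersStab
namespace PersStab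

/-! ### The poset `ℝᵒᵖ × ℝ` and blocks -/

/-- The poset `ℝᵒᵖ × ℝ`: `(a, b) ≤ (c, d)` iff `c ≤ a` and `b ≤ d`. -/
structure RopR where
  x : ℝ
  y : ℝ

instance : Preorder RopR where
  le p q := q.x ≤ p.x ∧ p.y ≤ q.y
  le_refl p := ⟨le_rfl, le_rfl⟩
  le_trans p q r h₁ h₂ := ⟨h₂.1.trans h₁.1, h₁.2.trans h₂.2⟩

lemma RopR.le_def {p q : RopR} : p ≤ q ↔ q.x ≤ p.x ∧ p.y ≤ q.y := Iff.rfl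

/-- The `ε`-shift on the poset `ℝᵒᵖ × ℝ`: `(a, b) ↦ (a - ε, b + ε)`. -/
def shf (ε : ℝ) (p : RopR) : RopR := ⟨p.x - ε, p.y + ε⟩

/-- The block `(a,b)_BL = {(x,y) ∈ U : a < x, y < b}` (with `a`, `b` finite;
for infinite endpoints this shape is of type co, oc or c). -/
def blkO (a b : ℝ) : Set RopR := {p | p.x ≤ p.y ∧ a < p.x ∧ p.y < b}

/-- The blocks `[a,b)_BL = {(x,y) ∈ U : a ≤ y < b}` (for `s = a` finite) and
`(-∞,b)_BL = {(x,y) ∈ U : y < b}` (for `s = ⊥`). -/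
def blkCO (s : EReal) (b : ℝ) : Set RopR := {p | p.x ≤ p.y ∧ s ≤ (p.y : EReal) ∧ p.y < b}

/-- The blocks `(a,b]_BL = {(x,y) ∈ U : a < x ≤ b}` (for `t = b` finite) and
`(a,∞)_BL = {(x,y) ∈ U : a < x}` (for `t = ⊤`). -/
def blkOC (a : ℝ) (t : EReal) : Set RopR := {p | p.x ≤ p.y ∧ a < p.x ∧ (p.x : EReal) ≤ t}

/-- The closed blocks `{(x,y) ∈ U : x ≤ t, s ≤ y}`: this includes `[a,b]_BL`
(`s = a ≤ t = b` finite), `[b,a]_BL` (`t = a < s = b` finite), `[a,∞)_BL` (`t = ⊤`),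
`(-∞,b]_BL` (`s = ⊥`) and `(-∞,∞)_BL = U`. -/
def blkC (s t : EReal) : Set RopR := {p | p.x ≤ p.y ∧ (p.x : EReal) ≤ t ∧ s ≤ (p.y : EReal)}

/-- The four types of blocks. -/
inductive BlockType : Type
  | o | co | oc | c
deriving DecidableEq

/-- The blocks of each type. -/
def IsBlockOfType : BlockType → Set RopR → Prop
  | .o, J => ∃ a b : ℝ, a < b ∧ J = blkO a b
  | .co, J => ∃ (s : EReal) (b : ℝ), s ≠ ⊤ ∧ s < (b : EReal) ∧ J = blkCO s b
  | .oc, J => ∃ (a : ℝ) (t : EReal), t ≠ ⊥ ∧ (a : EReal) < t ∧ J = blkOC a t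
  | .c, J => ∃ s t : EReal, s ≠ ⊤ ∧ t ≠ ⊥ ∧ J = blkC s t

/-- A block: an interval of `U ⊆ ℝᵒᵖ × ℝ` of one of the five standard shapes. -/
def IsBlock (J : Set RopR) : Prop := ∃ τ, IsBlockOfType τ J

lemma blkO_convex (a b : ℝ) : IsConvexIn (blkO a b) := by
  rintro p q r ⟨hp1, hp2, hp3⟩ ⟨hr1, hr2, hr3⟩ ⟨hpq1, hpq2⟩ ⟨hqr1, hqr2⟩
  exact ⟨by linarith, by linarith, by linarith⟩

lemma blkCO_convex (s : EReal) (b : ℝ) : IsConvexIn (blkCO s b) := by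
  rintro p q r ⟨hp1, hp2, hp3⟩ ⟨hr1, hr2, hr3⟩ ⟨hpq1, hpq2⟩ ⟨hqr1, hqr2⟩
  refine ⟨by linarith, hp2.trans ?_, by linarith⟩
  exact_mod_cast hpq2

lemma blkOC_convex (a : ℝ) (t : EReal) : IsConvexIn (blkOC a t) := by
  rintro p q r ⟨hp1, hp2, hp3⟩ ⟨hr1, hr2, hr3⟩ ⟨hpq1, hpq2⟩ ⟨hqr1, hqr2⟩
  refine ⟨by linarith, by linarith, le_trans ?_ hp3⟩
  exact_mod_cast hpq1

lemma blkC_convex (s t : EReal) : IsConvexIn (blkC s t) := by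
  rintro p q r ⟨hp1, hp2, hp3⟩ ⟨hr1, hr2, hr3⟩ ⟨hpq1, hpq2⟩ ⟨hqr1, hqr2⟩
  refine ⟨by linarith, le_trans ?_ hp2, hp3.trans ?_⟩
  · exact_mod_cast hpq1
  · exact_mod_cast hpq2

lemma IsBlockOfType.convex {τ : BlockType} {J : Set RopR} (h : IsBlockOfType τ J) :
    IsConvexIn J := by
  cases τ with
  | o => obtain ⟨a, b, -, rfl⟩ := h; exact blkO_convex a b
  | co => obtain ⟨s, b, -, -, rfl⟩ := h; exact blkCO_convex s b
  | oc => obtain ⟨a, t, -, -, rfl⟩ := h; exact blkOC_convex a t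
  | c => obtain ⟨s, t, -, -, rfl⟩ := h; exact blkC_convex s t

lemma IsBlock.convex {J : Set RopR} (h : IsBlock J) : IsConvexIn J :=
  h.choose_spec.convex

end PersStab
namespace PersStab

/-! ### The zigzag poset `ZZ ⊆ ℤᵒᵖ × ℤ` and the poset `U ⊆ ℝᵒᵖ × ℝ` -/

/-- The zigzag poset `ZZ = {(i,j) : i ∈ ℤ, j ∈ {i, i-1}} ⊆ ℤᵒᵖ × ℤ`. -/
structure ZZpt where
  i : ℤ
  j : ℤ
  hij : j = i ∨ j = i - 1

instance : Preorder ZZpt where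
  le p q := q.i ≤ p.i ∧ p.j ≤ q.j
  le_refl p := ⟨le_rfl, le_rfl⟩
  le_trans p q r h₁ h₂ := ⟨h₂.1.trans h₁.1, h₁.2.trans h₂.2⟩

lemma ZZpt.le_def {p q : ZZpt} : p ≤ q ↔ q.i ≤ p.i ∧ p.j ≤ q.j := Iff.rfl

lemma ZZpt.j_le_i (p : ZZpt) : p.j ≤ p.i := by
  rcases p.hij with h | h <;> omega

/-- The first coordinate of a zigzag point, as an extended real. -/
def pI (p : ZZpt) : EReal := ((p.i : ℝ) : EReal)
/-- The second coordinate of a zigzag point, as an extended real. -/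
def pJ (p : ZZpt) : EReal := ((p.j : ℝ) : EReal)

lemma pJ_le_pI (p : ZZpt) : pJ p ≤ pI p := by
  unfold pI pJ
  exact_mod_cast p.j_le_i

lemma pI_mono {p q : ZZpt} (h : q.i ≤ p.i) : pI q ≤ pI p := by
  unfold pI; exact_mod_cast h

lemma pJ_mono {p q : ZZpt} (h : p.j ≤ q.j) : pJ p ≤ pJ q := by
  unfold pJ; exact_mod_cast h

/-- `(β,β) ≤ (i,j)` in the product order (with extended-real endpoints). -/
def zzLeLo (β : EReal) (p : ZZpt) : Prop := β ≤ pI p ∧ β ≤ pJ p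
/-- `(β,β) < (i,j)` in the product order. -/
def zzLtLo (β : EReal) (p : ZZpt) : Prop := zzLeLo β p ∧ ¬(pI p ≤ β ∧ pJ p ≤ β)
/-- `(i,j) ≤ (δ,δ)` in the product order. -/
def zzLeHi (p : ZZpt) (δ : EReal) : Prop := pI p ≤ δ ∧ pJ p ≤ δ
/-- `(i,j) < (δ,δ)` in the product order. -/
def zzLtHi (p : ZZpt) (δ : EReal) : Prop := zzLeHi p δ ∧ ¬(δ ≤ pI p ∧ δ ≤ pJ p)

/-- The zigzag interval `(β,δ)_ZZ`. -/
def zzO (β δ : EReal) : Set ZZpt := {p | zzLtLo β p ∧ zzLtHi p δ}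
/-- The zigzag interval `[β,δ)_ZZ`. -/
def zzCO (β δ : EReal) : Set ZZpt := {p | zzLeLo β p ∧ zzLtHi p δ}
/-- The zigzag interval `(β,δ]_ZZ`. -/
def zzOC (β δ : EReal) : Set ZZpt := {p | zzLtLo β p ∧ zzLeHi p δ}
/-- The zigzag interval `[β,δ]_ZZ`. -/
def zzCC (β δ : EReal) : Set ZZpt := {p | zzLeLo β p ∧ zzLeHi p δ}

lemma zzLeLo_iff (β : EReal) (p : ZZpt) : zzLeLo β p ↔ β ≤ pJ p :=
  ⟨fun h => h.2, fun h => ⟨h.trans (pJ_le_pI p), h⟩⟩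

lemma zzLtLo_iff (β : EReal) (p : ZZpt) : zzLtLo β p ↔ β ≤ pJ p ∧ β < pI p := by
  constructor
  · rintro ⟨⟨h1, h2⟩, h3⟩
    refine ⟨h2, not_le.1 fun h => h3 ⟨h, (pJ_le_pI p).trans h⟩⟩
  · rintro ⟨h1, h2⟩
    exact ⟨⟨h2.le, h1⟩, fun h => absurd h.1 (not_le.2 h2)⟩

lemma zzLeHi_iff (p : ZZpt) (δ : EReal) : zzLeHi p δ ↔ pI p ≤ δ :=
  ⟨fun h => h.1, fun h => ⟨h, (pJ_le_pI p).trans h⟩⟩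

lemma zzLtHi_iff (p : ZZpt) (δ : EReal) : zzLtHi p δ ↔ pI p ≤ δ ∧ pJ p < δ := by
  constructor
  · rintro ⟨⟨h1, h2⟩, h3⟩
    refine ⟨h1, not_le.1 fun h => h3 ⟨(h.trans (pJ_le_pI p) : δ ≤ pI p), h⟩⟩
  · rintro ⟨h1, h2⟩
    exact ⟨⟨h1, h2.le⟩, fun h => absurd h.2 (not_le.2 h2)⟩

lemma zzO_convex (β δ : EReal) : IsConvexIn (zzO β δ) := by
  rintro p q r ⟨hp1, hp2⟩ ⟨hr1, hr2⟩ hpq hqr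
  rw [zzLtLo_iff] at hp1 hr1
  rw [zzLtHi_iff] at hp2 hr2
  exact ⟨(zzLtLo_iff β q).2 ⟨hp1.1.trans (pJ_mono hpq.2),
      lt_of_lt_of_le hr1.2 (pI_mono hqr.1)⟩,
    (zzLtHi_iff q δ).2 ⟨(pI_mono hpq.1).trans hp2.1,
      lt_of_le_of_lt (pJ_mono hqr.2) hr2.2⟩⟩

lemma zzCO_convex (β δ : EReal) : IsConvexIn (zzCO β δ) := by
  rintro p q r ⟨hp1, hp2⟩ ⟨hr1, hr2⟩ hpq hqr
  rw [zzLeLo_iff] at hp1 hr1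
  rw [zzLtHi_iff] at hp2 hr2
  exact ⟨(zzLeLo_iff β q).2 (hp1.trans (pJ_mono hpq.2)),
    (zzLtHi_iff q δ).2 ⟨(pI_mono hpq.1).trans hp2.1,
      lt_of_le_of_lt (pJ_mono hqr.2) hr2.2⟩⟩

lemma zzOC_convex (β δ : EReal) : IsConvexIn (zzOC β δ) := by
  rintro p q r ⟨hp1, hp2⟩ ⟨hr1, hr2⟩ hpq hqr
  rw [zzLtLo_iff] at hp1 hr1
  rw [zzLeHi_iff] at hp2 hr2
  exact ⟨(zzLtLo_iff β q).2 ⟨hp1.1.trans (pJ_mono hpq.2),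
      lt_of_lt_of_le hr1.2 (pI_mono hqr.1)⟩,
    (zzLeHi_iff q δ).2 ((pI_mono hpq.1).trans hp2)⟩

lemma zzCC_convex (β δ : EReal) : IsConvexIn (zzCC β δ) := by
  rintro p q r ⟨hp1, hp2⟩ ⟨hr1, hr2⟩ hpq hqr
  rw [zzLeLo_iff] at hp1 hr1
  rw [zzLeHi_iff] at hp2 hr2
  exact ⟨(zzLeLo_iff β q).2 (hp1.trans (pJ_mono hpq.2)),
    (zzLeHi_iff q δ).2 ((pI_mono hpq.1).trans hp2)⟩

/-- The poset `U ⊆ ℝᵒᵖ × ℝ` of pairs `(x, y)` with `x ≤ y`. -/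
abbrev UPos := {p : RopR // p.x ≤ p.y}

lemma UPos.le_def {u v : UPos} : u ≤ v ↔ v.1.x ≤ u.1.x ∧ u.1.y ≤ v.1.y := Iff.rfl

/-- The block `(β,δ)_BL` of `U` (extended-real endpoints). -/
def ublkO (β δ : EReal) : Set UPos := {u | β < (u.1.x : EReal) ∧ ((u.1.y : EReal)) < δ}
/-- The block `[β,δ)_BL` of `U`. -/
def ublkCO (β δ : EReal) : Set UPos := {u | β ≤ (u.1.y : EReal) ∧ ((u.1.y : EReal)) < δ}
/-- The block `(β,δ]_BL` of `U`. -/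
def ublkOC (β δ : EReal) : Set UPos := {u | β < (u.1.x : EReal) ∧ ((u.1.x : EReal)) ≤ δ}
/-- The block `[β,δ]_BL` of `U`. -/
def ublkCC (β δ : EReal) : Set UPos := {u | ((u.1.x : EReal)) ≤ δ ∧ β ≤ (u.1.y : EReal)}

lemma coeR_mono {s t : ℝ} (h : s ≤ t) : (s : EReal) ≤ (t : EReal) := by exact_mod_cast h

lemma ublkO_convex (β δ : EReal) : IsConvexIn (ublkO β δ) := by
  rintro p q r ⟨hp1, hp2⟩ ⟨hr1, hr2⟩ hpq hqr
  exact ⟨lt_of_lt_of_le hr1 (coeR_mono hqr.1), lt_of_le_of_lt (coeR_mono hqr.2) hr2⟩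

lemma ublkCO_convex (β δ : EReal) : IsConvexIn (ublkCO β δ) := by
  rintro p q r ⟨hp1, hp2⟩ ⟨hr1, hr2⟩ hpq hqr
  exact ⟨hp1.trans (coeR_mono hpq.2), lt_of_le_of_lt (coeR_mono hqr.2) hr2⟩

lemma ublkOC_convex (β δ : EReal) : IsConvexIn (ublkOC β δ) := by
  rintro p q r ⟨hp1, hp2⟩ ⟨hr1, hr2⟩ hpq hqr
  exact ⟨lt_of_lt_of_le hr1 (coeR_mono hqr.1), (coeR_mono hpq.1).trans hp2⟩

lemma ublkCC_convex (β δ : EReal) : IsConvexIn (ublkCC β δ) := by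
  rintro p q r ⟨hp1, hp2⟩ ⟨hr1, hr2⟩ hpq hqr
  exact ⟨(coeR_mono hpq.1).trans hp1, hp2.trans (coeR_mono hpq.2)⟩

/-! ### The block extension functor `E` -/

variable {K : Type} [Field K]

attribute [local instance] Classical.decEq

/-- The set of zigzag indices lying below `u ∈ U` in `ℝᵒᵖ × ℝ`:
`{(i,j) ∈ ZZ : u.x ≤ i and j ≤ u.y}`. -/
def ZZbelow (u : UPos) : Set ZZpt := {p | u.1.x ≤ (p.i : ℝ) ∧ (p.j : ℝ) ≤ u.1.y}

lemma ZZbelow_mono {u v : UPos} (h : u ≤ v) : ZZbelow u ⊆ ZZbelow v := by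
  rintro p ⟨h1, h2⟩
  exact ⟨le_trans h.1 h1, le_trans h2 h.2⟩

/-- The submodule of relations defining the colimit of `V` over `S`. -/
noncomputable def relSub (V : PersMod K ZZpt) (S : Set ZZpt) :
    Submodule K (⨁ p : S, V.V p.1) :=
  Submodule.span K {x | ∃ (p q : ↥S) (h : p.1 ≤ q.1) (v : V.V p.1),
    x = DirectSum.lof K ↥S (fun r => V.V r.1) p v -
      DirectSum.lof K ↥S (fun r => V.V r.1) q (V.map h v)}

/-- The map between direct sums induced by an inclusion of index sets. -/
noncomputable def fwd (V : PersMod K ZZpt) {S T : Set ZZpt} (hST : S ⊆ T) :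
    (⨁ p : S, V.V p.1) →ₗ[K] (⨁ p : T, V.V p.1) :=
  DirectSum.toModule K ↥S _
    (fun p => DirectSum.lof K ↥T (fun r => V.V r.1) ⟨p.1, hST p.2⟩)

set_option maxHeartbeats 1000000 in
lemma fwd_lof (V : PersMod K ZZpt) {S T : Set ZZpt} (hST : S ⊆ T) (p : ↥S)
    (v : V.V p.1) :
    fwd V hST (DirectSum.lof K ↥S (fun r => V.V r.1) p v) =
      DirectSum.lof K ↥T (fun r => V.V r.1) ⟨p.1, hST p.2⟩ v := by
  unfold fwd
  exact DirectSum.toModule_lof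
    (φ := fun q : ↥S => DirectSum.lof K ↥T (fun r => V.V r.1) ⟨q.1, hST q.2⟩) K p v

lemma fwd_rel (V : PersMod K ZZpt) {S T : Set ZZpt} (hST : S ⊆ T) :
    relSub V S ≤ (relSub V T).comap (fwd V hST) := by
  rw [← Submodule.map_le_iff_le_comap, relSub, Submodule.map_span]
  refine Submodule.span_le.2 ?_
  rintro x ⟨y, ⟨p, q, h, v, rfl⟩, rfl⟩
  refine Submodule.subset_span ?_
  refine ⟨⟨p.1, hST p.2⟩, ⟨q.1, hST q.2⟩, h, v, ?_⟩
  rw [map_sub, fwd_lof, fwd_lof]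

/-- The block extension functor `E` on objects: `E(V)` is the `U`-indexed module
whose value at `u` is the colimit of `V` over `{(i,j) ∈ ZZ : u.x ≤ i, j ≤ u.y}`,
computed as a quotient of a direct sum. -/
noncomputable def EMod (V : PersMod K ZZpt) : PersMod K UPos where
  V u := (⨁ p : ZZbelow u, V.V p.1) ⧸ relSub V (ZZbelow u)
  map {u v} h := Submodule.mapQ _ _ (fwd V (ZZbelow_mono h)) (fwd_rel V (ZZbelow_mono h))
  map_id u := by
    refine Submodule.linearMap_qext _ ?_
    refine DirectSum.linearMap_ext _ fun p => ?_
    obtain ⟨pv, hp⟩ := p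
    refine LinearMap.ext fun v => ?_
    simp only [LinearMap.coe_comp, Function.comp_apply, Submodule.mkQ_apply,
      Submodule.mapQ_apply, LinearMap.id_coe, id_eq]
    rw [fwd_lof]
  map_comp {u v w} h₁ h₂ := by
    refine Submodule.linearMap_qext _ ?_
    refine DirectSum.linearMap_ext _ fun p => ?_
    obtain ⟨pv, hp⟩ := p
    refine LinearMap.ext fun x => ?_
    simp only [LinearMap.coe_comp, Function.comp_apply, Submodule.mkQ_apply,
      Submodule.mapQ_apply]
    rw [fwd_lof, fwd_lof, fwd_lof]

end PersStab
namespace PersStab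

/-- Endpoints in `ℤ ∪ {±∞}`, coerced into the extended reals. -/
noncomputable def ez : WithBot (WithTop ℤ) → EReal
  | none => ⊥
  | some none => ⊤
  | some (some n) => ((n : ℝ) : EReal)

/-- Zigzag intervals: the intervals `⟨b,d⟩_ZZ` of the zigzag poset, with
endpoints in `ℤ ∪ {±∞}` as appropriate for each endpoint type. -/
def IsZZInterval (J : Set ZZpt) : Prop :=
  (∃ β δ : WithBot (WithTop ℤ), ez β < ez δ ∧ J = zzO (ez β) (ez δ)) ∨
  (∃ (b : ℤ) (δ : WithBot (WithTop ℤ)), ((b : ℝ) : EReal) < ez δ ∧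
    J = zzCO ((b : ℝ) : EReal) (ez δ)) ∨
  (∃ (β : WithBot (WithTop ℤ)) (d : ℤ), ez β < ((d : ℝ) : EReal) ∧
    J = zzOC (ez β) ((d : ℝ) : EReal)) ∨
  (∃ b d : ℤ, b ≤ d ∧ J = zzCC ((b : ℝ) : EReal) ((d : ℝ) : EReal))

/-- Blocks, as subsets of the poset `U`. -/
def IsBlockU (J : Set UPos) : Prop :=
  (∃ β δ : EReal, J = ublkO β δ) ∨ (∃ β δ : EReal, J = ublkCO β δ) ∨
  (∃ β δ : EReal, J = ublkOC β δ) ∨ (∃ β δ : EReal, J = ublkCC β δ)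

/-- A zigzag interval and a block correspond when they are of the same endpoint
type and have the same endpoints. -/
def ZZBlockCorresponds (J : Set ZZpt) (J' : Set UPos) : Prop :=
  (∃ β δ : WithBot (WithTop ℤ), ez β < ez δ ∧ J = zzO (ez β) (ez δ) ∧
    J' = ublkO (ez β) (ez δ)) ∨
  (∃ (b : ℤ) (δ : WithBot (WithTop ℤ)), ((b : ℝ) : EReal) < ez δ ∧
    J = zzCO ((b : ℝ) : EReal) (ez δ) ∧ J' = ublkCO ((b : ℝ) : EReal) (ez δ)) ∨
  (∃ (β : WithBot (WithTop ℤ)) (d : ℤ), ez β < ((d : ℝ) : EReal) ∧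
    J = zzOC (ez β) ((d : ℝ) : EReal) ∧ J' = ublkOC (ez β) ((d : ℝ) : EReal)) ∨
  (∃ b d : ℤ, b ≤ d ∧ J = zzCC ((b : ℝ) : EReal) ((d : ℝ) : EReal) ∧
    J' = ublkCC ((b : ℝ) : EReal) ((d : ℝ) : EReal))

/-!
`E(V)(u)` is the colimit of `V` over the finite zigzag `ZZbelow u = {(i,j) : u.x ≤ i, j ≤ u.y}`,
so a decomposition `V ≅ ⊕ I^J` induces `E(V)(u) ≅ ⊕ colim_{ZZbelow u} I^J`. Along the zigzag
path both `J` and `ZZbelow u` are intervals, so `J ∩ ZZbelow u` is connected; the colimit of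
`I^J` is therefore `K` when `J ∩ ZZbelow u` is nonempty and upward closed in `ZZbelow u`, and
`0` when a class can leave `J` inside `ZZbelow u`. Treating the lower and the upper endpoint
separately, this condition holds exactly on the block with the endpoints and type of `J`.
-/

theorem _root_.Set.OrdConnected.apply_eq_of_add_one {α : Type*} {S : Set ℤ} (hS : S.OrdConnected)
    {f : ℤ → α} (hf : ∀ n ∈ S, n + 1 ∈ S → f n = f (n + 1)) {m n : ℤ} (hm : m ∈ S)
    (hn : n ∈ S) : f m = f n := by
  wlog hmn : m ≤ n generalizing m n
  · exact (this hn hm (le_of_not_ge hmn)).symm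
  induction n, hmn using Int.leInduction with
  | base => rfl
  | succ n hmn ih =>
    have hnS : n ∈ S := hS.out hm hn ⟨hmn, by omega⟩
    exact (ih hnS).trans (hf n hnS hn)

/-- The zigzag poset as a path `ℤ → ZZ`: `2k ↦ (k, k)` and `2k - 1 ↦ (k, k - 1)`. -/
def zigzag (n : ℤ) : ZZpt := ⟨(n + 1) / 2, n / 2, by omega⟩

lemma zigzag_i_mono : Monotone fun n => (zigzag n).i := fun m n h => by
  simp only [zigzag]; omega

lemma zigzag_j_mono : Monotone fun n => (zigzag n).j := fun m n h => by
  simp only [zigzag]; omega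

lemma zigzag_i_add_j (p : ZZpt) : zigzag (p.i + p.j) = p := by
  obtain ⟨i, j, hij⟩ := p
  simp only [zigzag, ZZpt.mk.injEq]
  omega

lemma zigzag_le_or_ge (n : ℤ) : zigzag n ≤ zigzag (n + 1) ∨ zigzag (n + 1) ≤ zigzag n := by
  simp only [ZZpt.le_def, zigzag]
  omega

lemma ordConnected_preimage_ZZbelow (u : UPos) : (zigzag ⁻¹' ZZbelow u).OrdConnected :=
  ⟨fun _ h₁ _ h₃ _ h => ⟨h₁.1.trans (by exact_mod_cast zigzag_i_mono h.1),
    (show ((zigzag _).j : ℝ) ≤ _ by exact_mod_cast zigzag_j_mono h.2).trans h₃.2⟩⟩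

lemma coe_le_pI {u : UPos} {p : ZZpt} (hp : p ∈ ZZbelow u) : (u.1.x : EReal) ≤ pI p :=
  EReal.coe_le_coe_iff.2 hp.1

lemma pJ_le_coe {u : UPos} {p : ZZpt} (hp : p ∈ ZZbelow u) : pJ p ≤ (u.1.y : EReal) :=
  EReal.coe_le_coe_iff.2 hp.2

/-- The combinatorics behind `colim_{ZZbelow u} I^J = I^{J'}(u)`. -/
structure IsColimitBlock (J : Set ZZpt) (J' : Set UPos) : Prop where
  ordConnected : (zigzag ⁻¹' J).OrdConnected
  exists_mem : ∀ u ∈ J', ∃ p : ZZbelow u, p.1 ∈ J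
  mem_of_le : ∀ u ∈ J', ∀ p ∈ ZZbelow u, ∀ q ∈ ZZbelow u, p ≤ q → p ∈ J → q ∈ J
  exists_exit : ∀ u ∉ J', ∀ p ∈ ZZbelow u, p ∈ J →
    ∃ r ∈ ZZbelow u, r ∈ J ∧ ∃ r' ∈ ZZbelow u, r' ∉ J ∧ r ≤ r'

lemma IsColimitBlock.mem_of_le_of_mem {J : Set ZZpt} {J' : Set UPos} (h : IsColimitBlock J J')
    {u v : UPos} (huv : u ≤ v) (hv : v ∈ J') {p : ZZpt} (hp : p ∈ ZZbelow u) (hpJ : p ∈ J) :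
    u ∈ J' := by
  by_contra hu
  obtain ⟨r, hr, hrJ, r', hr', hr'J, hrr'⟩ := h.exists_exit u hu p hp hpJ
  exact hr'J (h.mem_of_le v hv r (ZZbelow_mono huv hr) r' (ZZbelow_mono huv hr') hrr' hrJ)

def IsIntOrBot (β : EReal) : Prop := β = ⊥ ∨ ∃ b : ℤ, β = ((b : ℝ) : EReal)

def IsIntOrTop (δ : EReal) : Prop := δ = ⊤ ∨ ∃ d : ℤ, δ = ((d : ℝ) : EReal)

lemma isIntOrBot_ez {β : WithBot (WithTop ℤ)} (h : ez β ≠ ⊤) : IsIntOrBot (ez β) := by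
  rcases β with _ | _ | b
  · exact Or.inl rfl
  · exact absurd rfl h
  · exact Or.inr ⟨b, rfl⟩

lemma isIntOrTop_ez {δ : WithBot (WithTop ℤ)} (h : ez δ ≠ ⊥) : IsIntOrTop (ez δ) := by
  rcases δ with _ | _ | d
  · exact absurd rfl h
  · exact Or.inl rfl
  · exact Or.inr ⟨d, rfl⟩

/-- `L` and `L'` are the constraints that a lower endpoint `β`, closed or open, imposes on a
zigzag interval and on the corresponding block. -/
structure IsLowerEnd (β : EReal) (L : Set ZZpt) (L' : Set UPos) : Prop where
  mono : ∀ ⦃p q : ZZpt⦄, p.i ≤ q.i → p.j ≤ q.j → p ∈ L → q ∈ L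
  le_pJ : ∀ p ∈ L, β ≤ pJ p
  le_y : ∀ u ∈ L', β ≤ u.1.y
  mem : ∀ u ∈ L', ∀ p ∈ ZZbelow u, β ≤ pJ p → p ∈ L
  exists_exit : ∀ u ∉ L', ∀ p ∈ ZZbelow u, p ∈ L → ∃ r ∈ ZZbelow u, r ∈ L ∧ r.i ≤ p.i ∧
    r.j ≤ p.j ∧ ∃ r' ∈ ZZbelow u, r' ∉ L ∧ r ≤ r'

structure IsUpperEnd (δ : EReal) (U : Set ZZpt) (U' : Set UPos) : Prop where
  anti : ∀ ⦃p q : ZZpt⦄, q.i ≤ p.i → q.j ≤ p.j → p ∈ U → q ∈ U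
  pI_le : ∀ p ∈ U, pI p ≤ δ
  x_le : ∀ u ∈ U', (u.1.x : EReal) ≤ δ
  mem : ∀ u ∈ U', ∀ p ∈ ZZbelow u, pI p ≤ δ → p ∈ U
  exists_exit : ∀ u ∉ U', ∀ p ∈ ZZbelow u, p ∈ U → ∃ r ∈ ZZbelow u, r ∈ U ∧ p.i ≤ r.i ∧
    p.j ≤ r.j ∧ ∃ r' ∈ ZZbelow u, r' ∉ U ∧ r ≤ r'

lemma isLowerEnd_closed (β : EReal) : IsLowerEnd β {p | β ≤ pJ p} {u | β ≤ u.1.y} where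
  mono _ _ _ h hp := hp.trans (pJ_mono h)
  le_pJ _ := id
  le_y _ := id
  mem _ _ _ _ := id
  exists_exit _ hu _ hp hpL := absurd (hpL.trans (pJ_le_coe hp)) hu

lemma isLowerEnd_open {β : EReal} (hβ : IsIntOrBot β) :
    IsLowerEnd β {p | β ≤ pJ p ∧ β < pI p} {u | β < u.1.x} where
  mono _ _ hi hj hp := ⟨hp.1.trans (pJ_mono hj), hp.2.trans_le (pI_mono hi)⟩
  le_pJ _ := And.left
  le_y u hu := hu.le.trans (EReal.coe_le_coe_iff.2 u.2)
  mem u hu _ hp h := ⟨h, hu.trans_le (coe_le_pI hp)⟩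
  exists_exit u hu p hp hpL := by
    simp only [Set.mem_ofPred_eq, not_lt] at hu hpL
    rcases hβ with rfl | ⟨c, rfl⟩
    · exact absurd hu (not_le.2 (EReal.bot_lt_coe _))
    simp only [pI, pJ, EReal.coe_le_coe_iff, EReal.coe_lt_coe_iff, Int.cast_le, Int.cast_lt]
      at hu hpL
    have hy : (p.j : ℝ) ≤ u.1.y := hp.2
    have hcy : (c : ℝ) ≤ u.1.y := (Int.cast_le.2 hpL.1).trans hy
    refine ⟨⟨c + 1, c, Or.inr (by ring)⟩, ⟨?_, hcy⟩, ?_, by dsimp only; omega, hpL.1,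
      ⟨c, c, Or.inl rfl⟩, ⟨hu, hcy⟩, ?_, ⟨by dsimp only; omega, le_rfl⟩⟩
    · push_cast; linarith
    · simp [pI, pJ]
    · simp [pI, pJ]

lemma isUpperEnd_closed (δ : EReal) : IsUpperEnd δ {p | pI p ≤ δ} {u | (u.1.x : EReal) ≤ δ} where
  anti _ _ h _ hp := (pI_mono h).trans hp
  pI_le _ := id
  x_le _ := id
  mem _ _ _ _ := id
  exists_exit _ hu _ hp hpU := absurd ((coe_le_pI hp).trans hpU) hu

lemma isUpperEnd_open {δ : EReal} (hδ : IsIntOrTop δ) :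
    IsUpperEnd δ {p | pI p ≤ δ ∧ pJ p < δ} {u | (u.1.y : EReal) < δ} where
  anti _ _ hi hj hp := ⟨(pI_mono hi).trans hp.1, (pJ_mono hj).trans_lt hp.2⟩
  pI_le _ := And.left
  x_le u hu := (EReal.coe_le_coe_iff.2 u.2).trans hu.le
  mem u hu _ hp h := ⟨h, (pJ_le_coe hp).trans_lt hu⟩
  exists_exit u hu p hp hpU := by
    simp only [Set.mem_ofPred_eq, not_lt] at hu hpU
    rcases hδ with rfl | ⟨e, rfl⟩
    · exact absurd hu (not_le.2 (EReal.coe_lt_top _))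
    simp only [pI, pJ, EReal.coe_le_coe_iff, EReal.coe_lt_coe_iff, Int.cast_le, Int.cast_lt]
      at hu hpU
    have hx : u.1.x ≤ (p.i : ℝ) := hp.1
    have hxe : u.1.x ≤ (e : ℝ) := hx.trans (Int.cast_le.2 hpU.1)
    refine ⟨⟨e, e - 1, Or.inr rfl⟩, ⟨hxe, ?_⟩, ?_, hpU.1, by dsimp only; omega,
      ⟨e, e, Or.inl rfl⟩, ⟨hxe, hu⟩, ?_, ⟨le_rfl, by dsimp only; omega⟩⟩
    · push_cast; linarith
    · simp [pI, pJ]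
    · simp [pI, pJ]

lemma exists_mem_ZZbelow_of_le (u : UPos) (b : ℤ) (hb : (b : ℝ) ≤ u.1.y) :
    ∃ p ∈ ZZbelow u, b ≤ p.j ∧ p.i = max ⌈u.1.x⌉ b := by
  have hx : u.1.x ≤ (max ⌈u.1.x⌉ b : ℤ) :=
    (Int.le_ceil _).trans (by exact_mod_cast le_max_left _ _)
  by_cases h : ((max ⌈u.1.x⌉ b : ℤ) : ℝ) ≤ u.1.y
  · exact ⟨⟨_, _, Or.inl rfl⟩, ⟨hx, h⟩, le_max_right _ _, rfl⟩
  · have hbc : b < ⌈u.1.x⌉ := by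
      by_contra! hcb
      rw [max_eq_right hcb] at h
      exact h hb
    refine ⟨⟨_, max ⌈u.1.x⌉ b - 1, Or.inr rfl⟩, ⟨hx, ?_⟩, by dsimp only; omega, rfl⟩
    rw [max_eq_left hbc.le]
    push_cast
    linarith [Int.ceil_lt_add_one u.1.x, u.2]

lemma exists_mem_ZZbelow_between {β δ : EReal} (hβ : IsIntOrBot β) (hδ : IsIntOrTop δ)
    (hβδ : β ≤ δ) {u : UPos} (hβy : β ≤ u.1.y) (hxδ : (u.1.x : EReal) ≤ δ) :
    ∃ p ∈ ZZbelow u, β ≤ pJ p ∧ pI p ≤ δ := by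
  have hceil : (((⌈u.1.x⌉ : ℤ) : ℝ) : EReal) ≤ δ := by
    rcases hδ with rfl | ⟨d, rfl⟩
    · exact le_top
    · exact_mod_cast Int.ceil_le.2 (EReal.coe_le_coe_iff.1 hxδ)
  obtain ⟨b, hβb, hby, hbδ⟩ : ∃ b : ℤ, β ≤ ((b : ℝ) : EReal) ∧ (b : ℝ) ≤ u.1.y ∧
      ((b : ℝ) : EReal) ≤ δ := by
    rcases hβ with rfl | ⟨b, rfl⟩
    · refine ⟨⌈u.1.x⌉ - 1, bot_le, ?_, le_trans ?_ hceil⟩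
      · push_cast; linarith [Int.ceil_lt_add_one u.1.x, u.2]
      · exact_mod_cast (by omega : ⌈u.1.x⌉ - 1 ≤ ⌈u.1.x⌉)
    · exact ⟨b, le_rfl, EReal.coe_le_coe_iff.1 hβy, hβδ⟩
  obtain ⟨p, hp, hbp, hpi⟩ := exists_mem_ZZbelow_of_le u b hby
  refine ⟨p, hp, hβb.trans (by simp only [pJ]; exact_mod_cast hbp), ?_⟩
  rw [pI, hpi]
  rcases max_choice ⌈u.1.x⌉ b with h | h <;> rw [h] <;> assumption

lemma isColimitBlock_inter {β δ : EReal} {L U : Set ZZpt} {L' U' : Set UPos}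
    (hβ : IsIntOrBot β) (hδ : IsIntOrTop δ) (hβδ : β ≤ δ)
    (hL : IsLowerEnd β L L') (hU : IsUpperEnd δ U U') :
    IsColimitBlock (L ∩ U) (L' ∩ U') where
  ordConnected := ⟨fun _ hm _ hn _ hk =>
    ⟨hL.mono (zigzag_i_mono hk.1) (zigzag_j_mono hk.1) hm.1,
      hU.anti (zigzag_i_mono hk.2) (zigzag_j_mono hk.2) hn.2⟩⟩
  exists_mem u hu := by
    obtain ⟨p, hp, hβp, hpδ⟩ :=
      exists_mem_ZZbelow_between hβ hδ hβδ (hL.le_y u hu.1) (hU.x_le u hu.2)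
    exact ⟨⟨p, hp⟩, hL.mem u hu.1 p hp hβp, hU.mem u hu.2 p hp hpδ⟩
  mem_of_le u hu p _ q hq hpq hpJ :=
    ⟨hL.mem u hu.1 q hq ((hL.le_pJ p hpJ.1).trans (pJ_mono hpq.2)),
      hU.mem u hu.2 q hq ((pI_mono hpq.1).trans (hU.pI_le p hpJ.2))⟩
  exists_exit u hu p hp hpJ := by
    rcases not_and_or.1 hu with hu | hu
    · obtain ⟨r, hr, hrL, hri, hrj, r', hr', hr'L, hrr'⟩ := hL.exists_exit u hu p hp hpJ.1
      exact ⟨r, hr, ⟨hrL, hU.anti hri hrj hpJ.2⟩, r', hr', fun h => hr'L h.1, hrr'⟩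
    · obtain ⟨r, hr, hrU, hri, hrj, r', hr', hr'U, hrr'⟩ := hU.exists_exit u hu p hp hpJ.2
      exact ⟨r, hr, ⟨hL.mono hri hrj hpJ.1, hrU⟩, r', hr', fun h => hr'U h.2, hrr'⟩

lemma zzO_eq_inter (β δ : EReal) :
    zzO β δ = {p | β ≤ pJ p ∧ β < pI p} ∩ {p | pI p ≤ δ ∧ pJ p < δ} :=
  Set.ext fun p => and_congr (zzLtLo_iff β p) (zzLtHi_iff p δ)

lemma zzCO_eq_inter (β δ : EReal) : zzCO β δ = {p | β ≤ pJ p} ∩ {p | pI p ≤ δ ∧ pJ p < δ} :=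
  Set.ext fun p => and_congr (zzLeLo_iff β p) (zzLtHi_iff p δ)

lemma zzOC_eq_inter (β δ : EReal) : zzOC β δ = {p | β ≤ pJ p ∧ β < pI p} ∩ {p | pI p ≤ δ} :=
  Set.ext fun p => and_congr (zzLtLo_iff β p) (zzLeHi_iff p δ)

lemma zzCC_eq_inter (β δ : EReal) : zzCC β δ = {p | β ≤ pJ p} ∩ {p | pI p ≤ δ} :=
  Set.ext fun p => and_congr (zzLeLo_iff β p) (zzLeHi_iff p δ)

lemma ublkCC_eq_inter (β δ : EReal) :
    ublkCC β δ = {u | β ≤ (u.1.y : EReal)} ∩ {u | (u.1.x : EReal) ≤ δ} :=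
  Set.ext fun _ => and_comm

lemma IsZZInterval.exists_block {J : Set ZZpt} (hJ : IsZZInterval J) :
    ∃ J', ZZBlockCorresponds J J' ∧ IsColimitBlock J J' ∧ IsBlockU J' := by
  rcases hJ with ⟨β, δ, h, rfl⟩ | ⟨b, δ, h, rfl⟩ | ⟨β, d, h, rfl⟩ | ⟨b, d, h, rfl⟩
  · refine ⟨_, Or.inl ⟨β, δ, h, rfl, rfl⟩, ?_, Or.inl ⟨_, _, rfl⟩⟩
    rw [zzO_eq_inter]
    exact isColimitBlock_inter (isIntOrBot_ez h.ne_top) (isIntOrTop_ez h.ne_bot) h.le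
      (isLowerEnd_open (isIntOrBot_ez h.ne_top)) (isUpperEnd_open (isIntOrTop_ez h.ne_bot))
  · refine ⟨_, Or.inr (Or.inl ⟨b, δ, h, rfl, rfl⟩), ?_, Or.inr (Or.inl ⟨_, _, rfl⟩)⟩
    rw [zzCO_eq_inter]
    exact isColimitBlock_inter (Or.inr ⟨b, rfl⟩) (isIntOrTop_ez h.ne_bot) h.le
      (isLowerEnd_closed _) (isUpperEnd_open (isIntOrTop_ez h.ne_bot))
  · refine ⟨_, Or.inr (Or.inr (Or.inl ⟨β, d, h, rfl, rfl⟩)), ?_,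
      Or.inr (Or.inr (Or.inl ⟨_, _, rfl⟩))⟩
    rw [zzOC_eq_inter]
    exact isColimitBlock_inter (isIntOrBot_ez h.ne_top) (Or.inr ⟨d, rfl⟩) h.le
      (isLowerEnd_open (isIntOrBot_ez h.ne_top)) (isUpperEnd_closed _)
  · refine ⟨_, Or.inr (Or.inr (Or.inr ⟨b, d, h, rfl, rfl⟩)), ?_,
      Or.inr (Or.inr (Or.inr ⟨_, _, rfl⟩))⟩
    rw [zzCC_eq_inter, ublkCC_eq_inter]
    exact isColimitBlock_inter (Or.inr ⟨b, rfl⟩) (Or.inr ⟨d, rfl⟩) (by exact_mod_cast h)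
      (isLowerEnd_closed _) (isUpperEnd_closed _)

section Colimit

variable {K : Type} [Field K]

attribute [local instance] Classical.decEq

open Classical in
/-- `ivMap` for unrelated conditions `P` and `Q`, so as to compare summands of `V` and of
`E(V)`. -/
noncomputable def indicatorMap (K : Type) [Field K] (P Q : Prop) :
    (PLift P → K) →ₗ[K] (PLift Q → K) where
  toFun v _ := if h : P then v ⟨h⟩ else 0
  map_add' u v := by
    funext
    by_cases h : P <;> simp [h]
  map_smul' r v := by
    funext
    by_cases h : P <;> simp [h]

lemma ivMap_eq_indicatorMap {P : Type} [Preorder P] (J : Set P) (a c : P) :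
    ivMap K J a c = indicatorMap K (a ∈ J) (c ∈ J) := rfl

lemma indicatorMap_self (P : Prop) : indicatorMap K P P = LinearMap.id :=
  LinearMap.ext fun _ => funext fun ⟨h⟩ => by simp [indicatorMap, h]

lemma indicatorMap_comp {P Q R : Prop} (h : P → R → Q) :
    (indicatorMap K Q R).comp (indicatorMap K P Q) = indicatorMap K P R :=
  LinearMap.ext fun _ => funext fun ⟨hR⟩ => by
    by_cases hP : P <;> simp [indicatorMap, hP, h, hR]

lemma linearMap_eq_zero_of_not {P : Prop} (hP : ¬P) {N : Type*} [AddCommGroup N] [Module K N]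
    (f : (PLift P → K) →ₗ[K] N) : f = 0 :=
  haveI : IsEmpty (PLift P) := ⟨fun h => hP h.down⟩
  Subsingleton.elim f 0

variable {V : PersMod K ZZpt} {N : Type*} [AddCommGroup N] [Module K N]

noncomputable def EMod.ι (V : PersMod K ZZpt) (u : UPos) (p : ZZbelow u) :
    V.V p.1 →ₗ[K] (EMod V).V u :=
  (relSub V (ZZbelow u)).mkQ.comp (DirectSum.lof K (ZZbelow u) (fun r => V.V r.1) p)

lemma EMod.ι_map {u : UPos} {p q : ZZbelow u} (h : p.1 ≤ q.1) (v : V.V p.1) :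
    EMod.ι V u q (V.map h v) = EMod.ι V u p v :=
  ((Submodule.Quotient.eq _).2 <| Submodule.subset_span <| by exact ⟨p, q, h, v, rfl⟩).symm

lemma EMod.map_ι {u v : UPos} (h : u ≤ v) (p : ZZbelow u) (x : V.V p.1) :
    (EMod V).map h (EMod.ι V u p x) = EMod.ι V v ⟨p.1, ZZbelow_mono h p.2⟩ x :=
  congrArg _ (fwd_lof V _ p x)

lemma EMod.hom_ext {u : UPos} {f g : (EMod V).V u →ₗ[K] N}
    (h : ∀ p, f.comp (EMod.ι V u p) = g.comp (EMod.ι V u p)) : f = g :=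
  Submodule.linearMap_qext _ (DirectSum.linearMap_ext _ h)

noncomputable def EMod.desc (u : UPos) (f : ∀ p : ZZbelow u, V.V p.1 →ₗ[K] N)
    (hf : ∀ (p q : ZZbelow u) (h : p.1 ≤ q.1), (f q).comp (V.map h) = f p) :
    (EMod V).V u →ₗ[K] N :=
  Submodule.liftQ _ (DirectSum.toModule K _ N f) <| by
    rw [relSub, Submodule.span_le]
    rintro _ ⟨p, q, h, v, rfl⟩
    simp only [SetLike.mem_coe, LinearMap.mem_ker, map_sub, DirectSum.toModule_lof, sub_eq_zero]
    exact (LinearMap.congr_fun (hf p q h) v).symm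

lemma EMod.desc_comp_ι (u : UPos) (f : ∀ p : ZZbelow u, V.V p.1 →ₗ[K] N)
    (hf : ∀ (p q : ZZbelow u) (h : p.1 ≤ q.1), (f q).comp (V.map h) = f p) (p : ZZbelow u) :
    (EMod.desc u f hf).comp (EMod.ι V u p) = f p :=
  LinearMap.ext fun v => DirectSum.toModule_lof (φ := f) K p v

lemma DecompOver.map_symm_single {P : Type} [Preorder P] {pred : Set P → Prop}
    {M : PersMod K P} (D : DecompOver pred M) {a c : P} (h : a ≤ c) (i : D.ι)
    (w : PLift (a ∈ D.B i) → K) :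
    M.map h ((D.equiv a).symm (DFinsupp.single i w)) =
      (D.equiv c).symm (DFinsupp.single i (ivMap K (D.B i) a c w)) := by
  rw [LinearEquiv.eq_symm_apply, D.natural, LinearEquiv.apply_symm_apply,
    DFinsupp.mapRange.linearMap_apply, DFinsupp.mapRange_single]

variable {pred : Set ZZpt → Prop} (D : DecompOver pred V)

noncomputable def DecompOver.summandToEMod (u : UPos) (p : ZZbelow u) (i : D.ι) :
    (PLift (p.1 ∈ D.B i) → K) →ₗ[K] (EMod V).V u :=
  (EMod.ι V u p).comp ((D.equiv p.1).symm.toLinearMap.comp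
    (DFinsupp.lsingle (R := K) (M := fun j => PLift (p.1 ∈ D.B j) → K) i))

lemma DecompOver.summandToEMod_eq_comp_of_le {u : UPos} {p q : ZZbelow u} (h : p.1 ≤ q.1)
    (i : D.ι) :
    D.summandToEMod u p i =
      (D.summandToEMod u q i).comp (indicatorMap K (p.1 ∈ D.B i) (q.1 ∈ D.B i)) :=
  LinearMap.ext fun w => by
    simp only [DecompOver.summandToEMod, LinearMap.comp_apply, LinearEquiv.coe_coe,
      DFinsupp.lsingle_apply, ← EMod.ι_map h, D.map_symm_single, ivMap_eq_indicatorMap]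

lemma DecompOver.map_comp_summandToEMod {u v : UPos} (h : u ≤ v) (p : ZZbelow u) (i : D.ι) :
    ((EMod V).map h).comp (D.summandToEMod u p i) =
      D.summandToEMod v ⟨p.1, ZZbelow_mono h p.2⟩ i :=
  LinearMap.ext fun _ => EMod.map_ι h p _

lemma DecompOver.EMod_hom_ext {u : UPos} {f g : (EMod V).V u →ₗ[K] N}
    (h : ∀ p i, f.comp (D.summandToEMod u p i) = g.comp (D.summandToEMod u p i)) : f = g :=
  EMod.hom_ext fun p => by
    have key : (f.comp (EMod.ι V u p)).comp (D.equiv p.1).symm.toLinearMap =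
        (g.comp (EMod.ι V u p)).comp (D.equiv p.1).symm.toLinearMap :=
      DFinsupp.lhom_ext' fun i => h p i
    exact LinearMap.ext fun v => by
      simpa using LinearMap.congr_fun key (D.equiv p.1 v)

/-- Any two points of `D.B i ∩ ZZbelow u` are joined by a chain of comparable neighbours on
the zigzag path. -/
lemma DecompOver.summandToEMod_comp_indicatorMap {i : D.ι}
    (hJ : (zigzag ⁻¹' D.B i).OrdConnected)
    {u : UPos} {p q : ZZbelow u} (hp : p.1 ∈ D.B i) (hq : q.1 ∈ D.B i) :
    (D.summandToEMod u q i).comp (indicatorMap K (p.1 ∈ D.B i) (q.1 ∈ D.B i)) =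
      D.summandToEMod u p i := by
  classical
  let f : ℤ → (PLift (p.1 ∈ D.B i) → K) →ₗ[K] (EMod V).V u := fun n =>
    if h : zigzag n ∈ ZZbelow u then
      (D.summandToEMod u ⟨_, h⟩ i).comp (indicatorMap K (p.1 ∈ D.B i) (zigzag n ∈ D.B i))
    else 0
  have hf : ∀ n (r : ZZbelow u), zigzag n = r.1 →
      f n = (D.summandToEMod u r i).comp (indicatorMap K (p.1 ∈ D.B i) (r.1 ∈ D.B i)) := by
    rintro n ⟨r, hr⟩ rfl
    simp only [f, dif_pos hr]
  have hS : (zigzag ⁻¹' (ZZbelow u ∩ D.B i)).OrdConnected :=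
    (ordConnected_preimage_ZZbelow u).inter hJ
  have hstep : ∀ n ∈ zigzag ⁻¹' (ZZbelow u ∩ D.B i), n + 1 ∈ zigzag ⁻¹' (ZZbelow u ∩ D.B i) →
      f n = f (n + 1) := by
    intro n hn hn1
    rw [hf n ⟨_, hn.1⟩ rfl, hf (n + 1) ⟨_, hn1.1⟩ rfl]
    rcases zigzag_le_or_ge n with h | h
    · rw [D.summandToEMod_eq_comp_of_le (p := ⟨_, hn.1⟩) (q := ⟨_, hn1.1⟩) h,
        LinearMap.comp_assoc, indicatorMap_comp fun _ _ => hn.2]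
    · rw [D.summandToEMod_eq_comp_of_le (p := ⟨_, hn1.1⟩) (q := ⟨_, hn.1⟩) h,
        LinearMap.comp_assoc, indicatorMap_comp fun _ _ => hn1.2]
  have hmem : ∀ r : ZZbelow u, r.1 ∈ D.B i → r.1.i + r.1.j ∈ zigzag ⁻¹' (ZZbelow u ∩ D.B i) :=
    fun r hr => by simpa only [Set.mem_preimage, zigzag_i_add_j] using ⟨r.2, hr⟩
  rw [← hf _ q (zigzag_i_add_j q.1), hS.apply_eq_of_add_one hstep (hmem q hq) (hmem p hp),
    hf _ p (zigzag_i_add_j p.1), indicatorMap_self, LinearMap.comp_id]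

lemma DecompOver.summandToEMod_eq_zero {i : D.ι} {J' : Set UPos}
    (hB : IsColimitBlock (D.B i) J') {u : UPos} (hu : u ∉ J') (p : ZZbelow u) :
    D.summandToEMod u p i = 0 := by
  by_cases hp : p.1 ∈ D.B i
  · obtain ⟨r, hr, hrJ, r', hr', hr'J, hrr'⟩ := hB.exists_exit u hu p.1 p.2 hp
    rw [← D.summandToEMod_comp_indicatorMap hB.ordConnected (q := ⟨r, hr⟩) hp hrJ,
      D.summandToEMod_eq_comp_of_le (q := ⟨r', hr'⟩) hrr',
      linearMap_eq_zero_of_not hr'J (D.summandToEMod u ⟨r', hr'⟩ i),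
      LinearMap.zero_comp, LinearMap.zero_comp]
  · exact linearMap_eq_zero_of_not hp _

variable {Bu : D.ι → Set UPos}

noncomputable def DecompOver.toBlocks (hB : ∀ i, IsColimitBlock (D.B i) (Bu i)) (u : UPos) :
    (EMod V).V u →ₗ[K] Π₀ i, (PLift (u ∈ Bu i) → K) :=
  EMod.desc u (fun p => (DFinsupp.mapRange.linearMap fun i =>
      indicatorMap K (p.1 ∈ D.B i) (u ∈ Bu i)).comp (D.equiv p.1).toLinearMap) <| by
    intro p q h
    have hcomp : (fun i => (indicatorMap K (q.1 ∈ D.B i) (u ∈ Bu i)).comp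
        (ivMap K (D.B i) p.1 q.1)) = fun i => indicatorMap K (p.1 ∈ D.B i) (u ∈ Bu i) :=
      funext fun i => indicatorMap_comp fun hp hu => (hB i).mem_of_le u hu p.1 p.2 q.1 q.2 h hp
    refine LinearMap.ext fun v => ?_
    rw [LinearMap.comp_apply, LinearMap.comp_apply, LinearEquiv.coe_coe, D.natural,
      ← LinearMap.comp_apply (DFinsupp.mapRange.linearMap _), ← DFinsupp.mapRange.linearMap_comp,
      hcomp]
    rfl

open Classical in
noncomputable def DecompOver.ofBlocks (hB : ∀ i, IsColimitBlock (D.B i) (Bu i)) (u : UPos) :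
    (Π₀ i, (PLift (u ∈ Bu i) → K)) →ₗ[K] (EMod V).V u :=
  DFinsupp.lsum ℕ fun i => if hu : u ∈ Bu i then
      (D.summandToEMod u ((hB i).exists_mem u hu).choose i).comp
        (indicatorMap K (u ∈ Bu i) (((hB i).exists_mem u hu).choose.1 ∈ D.B i))
    else 0

variable (hB : ∀ i, IsColimitBlock (D.B i) (Bu i))

lemma DecompOver.toBlocks_comp_summandToEMod (u : UPos) (p : ZZbelow u) (i : D.ι) :
    (D.toBlocks hB u).comp (D.summandToEMod u p i) =
      (DFinsupp.lsingle (R := K) (M := fun j => PLift (u ∈ Bu j) → K) i).comp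
        (indicatorMap K (p.1 ∈ D.B i) (u ∈ Bu i)) := by
  rw [DecompOver.summandToEMod, ← LinearMap.comp_assoc, DecompOver.toBlocks, EMod.desc_comp_ι]
  refine LinearMap.ext fun w => ?_
  simp only [LinearMap.comp_apply, LinearEquiv.coe_coe, LinearEquiv.apply_symm_apply,
    DFinsupp.lsingle_apply, DFinsupp.mapRange.linearMap_apply, DFinsupp.mapRange_single]

lemma DecompOver.ofBlocks_comp_lsingle {u : UPos} {i : D.ι} (hu : u ∈ Bu i) {p : ZZbelow u}
    (hp : p.1 ∈ D.B i) :
    (D.ofBlocks hB u).comp (DFinsupp.lsingle i) =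
      (D.summandToEMod u p i).comp (indicatorMap K (u ∈ Bu i) (p.1 ∈ D.B i)) := by
  have hp₀ := ((hB i).exists_mem u hu).choose_spec
  refine LinearMap.ext fun w => ?_
  rw [LinearMap.comp_apply, DFinsupp.lsingle_apply, DecompOver.ofBlocks, DFinsupp.lsum_single,
    dif_pos hu, ← D.summandToEMod_comp_indicatorMap (hB i).ordConnected hp hp₀,
    LinearMap.comp_assoc, indicatorMap_comp fun _ _ => hp]

lemma DecompOver.toBlocks_comp_ofBlocks (u : UPos) :
    (D.toBlocks hB u).comp (D.ofBlocks hB u) = LinearMap.id := by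
  refine DFinsupp.lhom_ext' fun i => ?_
  by_cases hu : u ∈ Bu i
  · obtain ⟨p, hp⟩ := (hB i).exists_mem u hu
    rw [LinearMap.comp_assoc, D.ofBlocks_comp_lsingle hB hu hp, ← LinearMap.comp_assoc,
      D.toBlocks_comp_summandToEMod hB, LinearMap.comp_assoc, indicatorMap_comp fun _ _ => hp,
      indicatorMap_self, LinearMap.comp_id, LinearMap.id_comp]
  · exact (linearMap_eq_zero_of_not hu _).trans (linearMap_eq_zero_of_not hu _).symm

lemma DecompOver.ofBlocks_comp_toBlocks (u : UPos) :
    (D.ofBlocks hB u).comp (D.toBlocks hB u) = LinearMap.id := by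
  refine D.EMod_hom_ext fun p i => ?_
  rw [LinearMap.comp_assoc, D.toBlocks_comp_summandToEMod hB, LinearMap.id_comp,
    ← LinearMap.comp_assoc]
  by_cases hp : p.1 ∈ D.B i
  · by_cases hu : u ∈ Bu i
    · rw [D.ofBlocks_comp_lsingle hB hu hp, LinearMap.comp_assoc, indicatorMap_comp fun _ _ => hu,
        indicatorMap_self, LinearMap.comp_id]
    · rw [linearMap_eq_zero_of_not hu ((D.ofBlocks hB u).comp _), LinearMap.zero_comp,
        D.summandToEMod_eq_zero (hB i) hu]
  · exact (linearMap_eq_zero_of_not hp _).trans (linearMap_eq_zero_of_not hp _).symm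

lemma DecompOver.toBlocks_natural {u v : UPos} (h : u ≤ v) :
    (D.toBlocks hB v).comp ((EMod V).map h) =
      (DFinsupp.mapRange.linearMap fun i => ivMap K (Bu i) u v).comp (D.toBlocks hB u) := by
  refine D.EMod_hom_ext fun p i => ?_
  have hsingle : (DFinsupp.mapRange.linearMap fun i => ivMap K (Bu i) u v).comp
      (DFinsupp.lsingle i) = (DFinsupp.lsingle i).comp (ivMap K (Bu i) u v) :=
    LinearMap.ext fun w => by
      simp only [LinearMap.comp_apply, DFinsupp.lsingle_apply, DFinsupp.mapRange.linearMap_apply,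
        DFinsupp.mapRange_single]
  rw [LinearMap.comp_assoc, D.map_comp_summandToEMod, D.toBlocks_comp_summandToEMod,
    LinearMap.comp_assoc, D.toBlocks_comp_summandToEMod, ← LinearMap.comp_assoc, hsingle,
    LinearMap.comp_assoc, ivMap_eq_indicatorMap,
    indicatorMap_comp fun hp hv => (hB i).mem_of_le_of_mem h hv p.2 hp]

noncomputable def DecompOver.extend {pred' : Set UPos → Prop} (hpred : ∀ i, pred' (Bu i)) :
    DecompOver pred' (EMod V) where
  ι := D.ι
  B := Bu
  mem := hpred
  equiv u := LinearEquiv.ofLinearMap (D.toBlocks hB u) (D.ofBlocks hB u)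
    (D.toBlocks_comp_ofBlocks hB u) (D.ofBlocks_comp_toBlocks hB u)
  natural h := LinearMap.congr_fun (D.toBlocks_natural hB h)

end Colimit

theorem block_extension_decomposition_general
    (K : Type) [Field K] (V : PersMod K ZZpt)
    (DV : DecompOver IsZZInterval V) :
    ∃ (D' : DecompOver IsBlockU (EMod V)) (e : DV.ι ≃ D'.ι),
      ∀ i : DV.ι, ZZBlockCorresponds (DV.B i) (D'.B (e i)) := by
  choose B' hcorr hcolim hblock using fun i => (DV.mem i).exists_block
  exact ⟨DV.extend hcolim hblock, Equiv.refl _, hcorr⟩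

/-- For a pointwise finite dimensional, interval decomposable zigzag module `V`,
the block extension `E(V)` is block decomposable, and there is a bijective
matching between `B(V)` and `B(E(V))` matching each zigzag interval
`⟨b,d⟩_ZZ` to the block `⟨b,d⟩_BL` of the same endpoint type. -/
theorem block_extension_decomposition
    (K : Type) [Field K] (V : PersMod K ZZpt) (hV : V.pfd)
    (DV : DecompOver IsZZInterval V) :
    ∃ (D' : DecompOver IsBlockU (EMod V)) (e : DV.ι ≃ D'.ι),
      ∀ i : DV.ι, ZZBlockCorresponds (DV.B i) (D'.B (e i)) :=
  block_extension_decomposition_general K V DV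

end PersStab
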